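/- arXiv:1707.06905 — 5 statements merged into one kernel-verified Lean document; each statement's English description precedes it below -/
import Mathlib

section
/- For the elephant random walk, E[X_n] = (2q-1) Γ(n + 2p - 1)/(Γ(2p) Γ(n)) for all n ≥ 1. -/
open MeasureTheory ProbabilityTheory Filter

/-- `a_n` coefficients of the ERW: `a_1 = 1` and
`a_n = Γ(n + 2p - 1)/(Γ(n) Γ(2p))` for `n ≥ 2`. -/
noncomputable def aERW (p : ℝ) (n : ℕ) : ℝ :=
  if n ≤ 1 then 1 else Real.Gamma ((n : ℝ) + (2 * p - 1)) / (Real.Gamma n * Real.Gamma (2 * p))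

/-- `s_n^2 = q(1-q) + ∑_{j=2}^n a_j^{-2}`. -/
noncomputable def sSqERW (p q : ℝ) (n : ℕ) : ℝ :=
  q * (1 - q) + ∑ j ∈ Finset.Icc 2 n, ((aERW p j)⁻¹) ^ 2

/-- The elephant random walk: a sequence of ±1 increments `η n` (for `n ≥ 1`; we set `η 0 = 0`)
on a probability space, with first step `+1` with probability `q`, and conditional law of
`η_{n+1}` given `η_1, …, η_n` equal to `(1/(2n)) ∑_{k=1}^n (1 + (2p-1) η_k η)`. -/
structure IsERW {Ω : Type*} [MeasurableSpace Ω] (μ : Measure Ω)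
    (p q : ℝ) (η : ℕ → Ω → ℝ) : Prop where
  isProb : IsProbabilityMeasure μ
  p_mem : p ∈ Set.Ioo (0 : ℝ) 1
  q_mem : q ∈ Set.Ioo (0 : ℝ) 1
  meas : ∀ n, Measurable (η n)
  zero : ∀ ω, η 0 ω = 0
  pm_one : ∀ n, 1 ≤ n → ∀ ω, η n ω = 1 ∨ η n ω = -1
  first : μ {ω | η 1 ω = 1} = ENNReal.ofReal q
  cond : ∀ n, 1 ≤ n → ∀ e : ℝ, (e = 1 ∨ e = -1) →
    (μ[Set.indicator {ω | η (n + 1) ω = e} (fun _ => (1 : ℝ)) |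
        MeasurableSpace.comap (fun ω (k : Finset.Icc 1 n) => η k ω) inferInstance])
      =ᵐ[μ] fun ω => (1 / (2 * (n : ℝ))) * ∑ k ∈ Finset.Icc 1 n, (1 + (2 * p - 1) * η k ω * e)

/-- Position of the ERW at time `n`. -/
noncomputable def erwX {Ω : Type*} (η : ℕ → Ω → ℝ) (n : ℕ) (ω : Ω) : ℝ :=
  ∑ k ∈ Finset.Icc 1 n, η k ω

/-- A standard one-dimensional Brownian motion. -/
structure IsStdBM {Ω : Type*} [MeasurableSpace Ω] (μ : Measure Ω) (W : ℝ → Ω → ℝ) : Prop where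
  isProb : IsProbabilityMeasure μ
  meas : ∀ t, Measurable (W t)
  init : ∀ᵐ ω ∂μ, W 0 ω = 0
  indep_incr : ∀ (n : ℕ) (t : ℕ → ℝ), Monotone t → 0 ≤ t 0 →
    iIndepFun
      (fun i : Fin n => fun ω => W (t (i + 1)) ω - W (t i) ω) μ
  gauss_incr : ∀ s t : ℝ, 0 ≤ s → s ≤ t →
    Measure.map (fun ω => W t ω - W s ω) μ = gaussianReal 0 (Real.toNNReal (t - s))
  cont : ∀ᵐ ω ∂μ, Continuous fun t => W t ω

/-! Taking expectations in the conditional law of `η_{n+1}` gives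
`E[η_{n+1}] = (2p-1)/n · E[X_n]`, i.e. `E[X_{n+1}] = (1 + (2p-1)/n) E[X_n]` with
`E[X_1] = 2q-1`, and `Γ(n + 2p - 1)/Γ(n)` is the product solving this recursion. -/

lemma integral_eq_two_mul_measureReal_sub_one {Ω : Type*} [MeasurableSpace Ω] {μ : Measure Ω}
    [IsProbabilityMeasure μ] {f : Ω → ℝ} (hf : Measurable f) (hpm : ∀ ω, f ω = 1 ∨ f ω = -1) :
    ∫ ω, f ω ∂μ = 2 * μ.real {ω | f ω = 1} - 1 := by
  set s := {ω | f ω = 1}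
  have hs : MeasurableSet s := hf (measurableSet_singleton 1)
  have hf_eq : ∀ ω, f ω = 2 * s.indicator (fun _ => (1 : ℝ)) ω - 1 := by
    intro ω
    rcases hpm ω with h1 | h1 <;> simp [s, Set.indicator_apply, h1] <;> norm_num
  have h_int : Integrable (s.indicator fun _ => (1 : ℝ)) μ :=
    (integrable_indicator_iff hs).2 (integrable_const 1).integrableOn
  rw [integral_congr_ae (ae_of_all _ hf_eq), integral_sub (h_int.const_mul 2) (integrable_const 1),
    integral_const_mul, integral_indicator_const _ hs]
  simp

lemma Real.eq_mul_Gamma_div_of_succ_eq {a c : ℝ} (ha : 0 < 1 + a) {m : ℕ → ℝ} (h_one : m 1 = c)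
    (h_succ : ∀ n, 1 ≤ n → m (n + 1) = (1 + a / n) * m n) (n : ℕ) (hn : 1 ≤ n) :
    m n = c * Real.Gamma (n + a) / (Real.Gamma (1 + a) * Real.Gamma n) := by
  have hΓa : Real.Gamma (1 + a) ≠ 0 := (Real.Gamma_pos_of_pos ha).ne'
  induction n, hn using Nat.le_induction with
  | base => simp [h_one, hΓa]
  | succ n hn ih =>
    have hn₀ : (0 : ℝ) < n := by exact_mod_cast hn
    have hna : (n : ℝ) + a ≠ 0 := by
      have : (1 : ℝ) ≤ n := by exact_mod_cast hn
      linarith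
    have hΓn : Real.Gamma n ≠ 0 := (Real.Gamma_pos_of_pos hn₀).ne'
    rw [h_succ n hn, ih, Nat.cast_succ, add_right_comm, Real.Gamma_add_one hna,
      Real.Gamma_add_one hn₀.ne']
    field_simp

namespace IsERW

variable {Ω : Type*} [MeasurableSpace Ω] {μ : Measure Ω} {p q : ℝ} {η : ℕ → Ω → ℝ}

lemma integrable_eta (h : IsERW μ p q η) (k : ℕ) : Integrable (η k) μ := by
  have := h.isProb
  refine ⟨(h.meas k).aestronglyMeasurable, HasFiniteIntegral.of_bounded (C := 1) ?_⟩
  filter_upwards with ω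
  rcases Nat.eq_zero_or_pos k with rfl | hk
  · simp [h.zero ω]
  · rcases h.pm_one k hk ω with he | he <;> simp [he]

lemma integrable_erwX (h : IsERW μ p q η) (n : ℕ) : Integrable (erwX η n) μ :=
  integrable_finsetSum _ fun k _ => h.integrable_eta k

lemma integral_eta_one (h : IsERW μ p q η) : ∫ ω, η 1 ω ∂μ = 2 * q - 1 := by
  have := h.isProb
  rw [integral_eq_two_mul_measureReal_sub_one (h.meas 1) (h.pm_one 1 le_rfl), measureReal_def,
    h.first, ENNReal.toReal_ofReal h.q_mem.1.le]

lemma measureReal_eta_succ_eq_one (h : IsERW μ p q η) {n : ℕ} (hn : 1 ≤ n) :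
    μ.real {ω | η (n + 1) ω = 1} = 1 / 2 + (2 * p - 1) / (2 * n) * ∫ ω, erwX η n ω ∂μ := by
  have := h.isProb
  have hm : MeasurableSpace.comap (fun ω (k : Finset.Icc 1 n) => η k ω) inferInstance ≤
      ‹MeasurableSpace Ω› :=
    (measurable_pi_lambda (fun ω (k : Finset.Icc 1 n) => η k ω) fun k => h.meas k).comap_le
  have hn₀ : (n : ℝ) ≠ 0 := by positivity
  have h_law : ∀ ω, 1 / (2 * (n : ℝ)) * ∑ k ∈ Finset.Icc 1 n, (1 + (2 * p - 1) * η k ω * 1) =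
      1 / 2 + (2 * p - 1) / (2 * n) * erwX η n ω := by
    intro ω
    simp only [mul_one, Finset.sum_add_distrib, ← Finset.mul_sum, Finset.sum_const,
      Nat.card_Icc, add_tsub_cancel_right, nsmul_eq_mul, erwX]
    field_simp
  have hs : MeasurableSet {ω | η (n + 1) ω = 1} := h.meas (n + 1) (measurableSet_singleton 1)
  rw [← mul_one (μ.real _), ← smul_eq_mul, ← integral_indicator_const _ hs,
    ← integral_condExp hm, integral_congr_ae (h.cond n hn 1 (Or.inl rfl)), funext h_law,
    integral_add (integrable_const _) ((h.integrable_erwX n).const_mul _), integral_const_mul]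
  simp

lemma integral_eta_succ (h : IsERW μ p q η) {n : ℕ} (hn : 1 ≤ n) :
    ∫ ω, η (n + 1) ω ∂μ = (2 * p - 1) / n * ∫ ω, erwX η n ω ∂μ := by
  have := h.isProb
  rw [integral_eq_two_mul_measureReal_sub_one (h.meas (n + 1)) (h.pm_one (n + 1) (by omega)),
    h.measureReal_eta_succ_eq_one hn]
  ring

lemma integral_erwX_succ (h : IsERW μ p q η) {n : ℕ} (hn : 1 ≤ n) :
    ∫ ω, erwX η (n + 1) ω ∂μ = (1 + (2 * p - 1) / n) * ∫ ω, erwX η n ω ∂μ := by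
  have h_split : erwX η (n + 1) = fun ω => erwX η n ω + η (n + 1) ω := by
    funext ω
    exact Finset.sum_Icc_succ_top (by omega) _
  rw [h_split, integral_add (h.integrable_erwX n) (h.integrable_eta (n + 1)),
    h.integral_eta_succ hn]
  ring

end IsERW

/-- exact first moment of the ERW. -/
theorem erw_mean {Ω : Type*} [MeasurableSpace Ω] {μ : Measure Ω}
    {p q : ℝ} {η : ℕ → Ω → ℝ} (h : IsERW μ p q η) (n : ℕ) (hn : 1 ≤ n) :
    ∫ ω, erwX η n ω ∂μ =
      (2 * q - 1) * Real.Gamma ((n : ℝ) + (2 * p - 1)) /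
        (Real.Gamma (2 * p) * Real.Gamma n) := by
  have h_one : ∫ ω, erwX η 1 ω ∂μ = 2 * q - 1 := by
    simpa [erwX] using h.integral_eta_one
  have h_pos : 0 < 1 + (2 * p - 1) := by linarith [h.p_mem.1]
  simpa using Real.eq_mul_Gamma_div_of_succ_eq (m := fun n => ∫ ω, erwX η n ω ∂μ) h_pos h_one
    (fun _ => h.integral_erwX_succ) n hn
end

section
/- For the elephant random walk at the critical value p = 3/4, E[X_n^2] ~ n log n as n → ∞. -/
/-
At p = 3/4 the elephant has memory parameter 2p - 1 = 1/2, and conditioning on the past gives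
E[X_n η_{n+1}] = (2p - 1)/n · E[X_n²]. Since η_{n+1}² = 1 this yields the recursion
E[X_{n+1}²] = (1 + 1/n) E[X_n²] + 1, whose solution is E[X_n²] = n H_n with H_n the harmonic
numbers; and H_n ~ log n.
-/

open MeasureTheory ProbabilityTheory Filter

open Topology

lemma tendsto_harmonic_div_log :
    Tendsto (fun n : ℕ => (harmonic n : ℝ) / Real.log n) atTop (𝓝 1) := by
  have hlog : Tendsto (fun n : ℕ => Real.log n) atTop atTop :=
    Real.tendsto_log_atTop.comp tendsto_natCast_atTop_atTop
  have hlim := (Real.tendsto_harmonic_sub_log.mul (tendsto_inv_atTop_zero.comp hlog)).add_const 1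
  rw [mul_zero, zero_add] at hlim
  refine hlim.congr' ?_
  filter_upwards [hlog.eventually_gt_atTop 0] with n hn
  simp only [Function.comp_apply]
  field_simp
  ring

lemma erwX_succ {Ω : Type*} (η : ℕ → Ω → ℝ) (n : ℕ) (ω : Ω) :
    erwX η (n + 1) ω = erwX η n ω + η (n + 1) ω :=
  Finset.sum_Icc_succ_top (Nat.le_add_left 1 n) _

abbrev erwFiltration {Ω : Type*} (η : ℕ → Ω → ℝ) (n : ℕ) : MeasurableSpace Ω :=
  MeasurableSpace.comap (fun ω (k : Finset.Icc 1 n) => η k ω) inferInstance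

lemma measurable_erwX_erwFiltration {Ω : Type*} (η : ℕ → Ω → ℝ) (n : ℕ) :
    Measurable[erwFiltration η n] (erwX η n) := by
  refine Finset.measurable_sum _ fun k hk => ?_
  exact (measurable_pi_apply (X := fun _ : Finset.Icc 1 n => ℝ) ⟨k, hk⟩).comp (comap_measurable _)

namespace IsERW

variable {Ω : Type*} [MeasurableSpace Ω] {μ : Measure Ω} {p q : ℝ} {η : ℕ → Ω → ℝ}

lemma abs_le_one (h : IsERW μ p q η) (k : ℕ) (ω : Ω) : |η k ω| ≤ 1 := by
  rcases Nat.eq_zero_or_pos k with rfl | hk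
  · simp [h.zero ω]
  · rcases h.pm_one k hk ω with h1 | h1 <;> simp [h1]

lemma sq_eq_one (h : IsERW μ p q η) {k : ℕ} (hk : 1 ≤ k) (ω : Ω) : η k ω ^ 2 = 1 := by
  rcases h.pm_one k hk ω with h1 | h1 <;> simp [h1]

lemma measurable_erwX (h : IsERW μ p q η) (n : ℕ) : Measurable (erwX η n) :=
  Finset.measurable_sum _ fun k _ => h.meas k

lemma abs_erwX_le (h : IsERW μ p q η) (n : ℕ) (ω : Ω) : |erwX η n ω| ≤ n :=
  calc |erwX η n ω| ≤ ∑ k ∈ Finset.Icc 1 n, |η k ω| := Finset.abs_sum_le_sum_abs _ _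
    _ ≤ ∑ _k ∈ Finset.Icc 1 n, (1 : ℝ) := Finset.sum_le_sum fun k _ => h.abs_le_one k ω
    _ = n := by simp

lemma erwFiltration_le (h : IsERW μ p q η) (n : ℕ) :
    erwFiltration η n ≤ ‹MeasurableSpace Ω› :=
  Measurable.comap_le (measurable_pi_lambda _ fun k => h.meas k)

lemma integrable_erwX_sq (h : IsERW μ p q η) (n : ℕ) :
    Integrable (fun ω => erwX η n ω ^ 2) μ :=
  have := h.isProb
  .of_bound ((h.measurable_erwX n).pow_const 2).aestronglyMeasurable ((n : ℝ) ^ 2) <|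
    .of_forall fun ω => by
      simpa [Real.norm_eq_abs, abs_pow] using
        pow_le_pow_left₀ (abs_nonneg _) (h.abs_erwX_le n ω) 2

lemma integrable_erwX_mul_succ (h : IsERW μ p q η) (n : ℕ) :
    Integrable (erwX η n * η (n + 1)) μ :=
  have := h.isProb
  .of_bound ((h.measurable_erwX n).mul (h.meas _)).aestronglyMeasurable n <|
    .of_forall fun ω => by
      simpa [Real.norm_eq_abs, abs_mul] using
        mul_le_mul (h.abs_erwX_le n ω) (h.abs_le_one (n + 1) ω) (abs_nonneg _) n.cast_nonneg

lemma condExp_succ (h : IsERW μ p q η) {n : ℕ} (hn : 1 ≤ n) :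
    μ[η (n + 1) | erwFiltration η n] =ᵐ[μ] fun ω => (2 * p - 1) * erwX η n ω / n := by
  have := h.isProb
  have h_step : η (n + 1) = {ω | η (n + 1) ω = 1}.indicator (fun _ => (1 : ℝ)) -
      {ω | η (n + 1) ω = -1}.indicator (fun _ => 1) := by
    funext ω
    rcases h.pm_one (n + 1) (Nat.le_add_left 1 n) ω with h1 | h1 <;>
      simp [Set.indicator_apply, h1] <;> norm_num
  have h_up : Integrable ({ω | η (n + 1) ω = 1}.indicator fun _ => (1 : ℝ)) μ :=
    (integrable_const 1).indicator (h.meas (n + 1) (measurableSet_singleton 1))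
  have h_down : Integrable ({ω | η (n + 1) ω = -1}.indicator fun _ => (1 : ℝ)) μ :=
    (integrable_const 1).indicator (h.meas (n + 1) (measurableSet_singleton (-1)))
  rw [h_step, erwFiltration]
  filter_upwards [condExp_sub h_up h_down _, h.cond n hn 1 (Or.inl rfl),
    h.cond n hn (-1) (Or.inr rfl)] with ω h_sub h_plus h_minus
  rw [h_sub, Pi.sub_apply, h_plus, h_minus, ← mul_sub, ← Finset.sum_sub_distrib, erwX,
    Finset.mul_sum, Finset.mul_sum, Finset.sum_div]
  refine Finset.sum_congr rfl fun k _ => ?_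
  have : (n : ℝ) ≠ 0 := by positivity
  field_simp
  ring

lemma integral_erwX_mul_succ (h : IsERW μ p q η) {n : ℕ} (hn : 1 ≤ n) :
    ∫ ω, erwX η n ω * η (n + 1) ω ∂μ = (2 * p - 1) / n * ∫ ω, erwX η n ω ^ 2 ∂μ := by
  have := h.isProb
  have h_pull := condExp_mul_of_stronglyMeasurable_left
    (measurable_erwX_erwFiltration η n).stronglyMeasurable (h.integrable_erwX_mul_succ n)
    (Integrable.of_bound (μ := μ) (h.meas _).aestronglyMeasurable 1 (.of_forall (h.abs_le_one _)))
  calc ∫ ω, erwX η n ω * η (n + 1) ω ∂μ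
      = ∫ ω, (μ[erwX η n * η (n + 1) | erwFiltration η n]) ω ∂μ :=
        (integral_condExp (h.erwFiltration_le n)).symm
    _ = ∫ ω, (2 * p - 1) / n * erwX η n ω ^ 2 ∂μ := by
        refine integral_congr_ae ?_
        filter_upwards [h_pull, h.condExp_succ hn] with ω h_pull_ω h_drift
        rw [h_pull_ω, Pi.mul_apply, h_drift]
        ring
    _ = (2 * p - 1) / n * ∫ ω, erwX η n ω ^ 2 ∂μ := integral_const_mul _ _

lemma integral_erwX_sq_succ (h : IsERW μ p q η) {n : ℕ} (hn : 1 ≤ n) :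
    ∫ ω, erwX η (n + 1) ω ^ 2 ∂μ = (1 + 2 * (2 * p - 1) / n) * ∫ ω, erwX η n ω ^ 2 ∂μ + 1 := by
  have := h.isProb
  have h_expand : ∀ ω, erwX η (n + 1) ω ^ 2 =
      erwX η n ω ^ 2 + 2 * (erwX η n ω * η (n + 1) ω) + 1 := fun ω => by
    rw [erwX_succ, ← h.sq_eq_one (Nat.le_add_left 1 n) ω]
    ring
  have h_cross : Integrable (fun ω => 2 * (erwX η n ω * η (n + 1) ω)) μ :=
    (h.integrable_erwX_mul_succ n).const_mul 2
  have h_sum : Integrable (fun ω => erwX η n ω ^ 2 + 2 * (erwX η n ω * η (n + 1) ω)) μ :=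
    (h.integrable_erwX_sq n).add h_cross
  simp_rw [h_expand]
  rw [integral_add h_sum (integrable_const 1),
    integral_add (h.integrable_erwX_sq n) h_cross, integral_const_mul,
    h.integral_erwX_mul_succ hn]
  simp only [integral_const, probReal_univ, smul_eq_mul, mul_one]
  ring

lemma integral_erwX_sq_of_critical (h : IsERW μ (3 / 4) q η) {n : ℕ} (hn : 1 ≤ n) :
    ∫ ω, erwX η n ω ^ 2 ∂μ = n * harmonic n := by
  have := h.isProb
  induction n, hn using Nat.le_induction with
  | base =>
    have h_one : ∀ ω, erwX η 1 ω ^ 2 = 1 := fun ω => by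
      simpa [erwX] using h.sq_eq_one le_rfl ω
    simp [h_one]
  | succ n hn ih =>
    have : (n : ℝ) ≠ 0 := by positivity
    rw [h.integral_erwX_sq_succ hn, ih, harmonic_succ]
    push_cast
    field_simp
    ring

end IsERW

/-- critical case `p = 3/4`, `E[X_n^2] ~ n log n`. -/
theorem erw_second_moment_critical {Ω : Type*} [MeasurableSpace Ω] {μ : Measure Ω}
    {q : ℝ} {η : ℕ → Ω → ℝ} (h : IsERW μ (3 / 4) q η) :
    Tendsto (fun n : ℕ => (∫ ω, (erwX η n ω) ^ 2 ∂μ) / ((n : ℝ) * Real.log n))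
      atTop (nhds 1) := by
  refine tendsto_harmonic_div_log.congr' ?_
  filter_upwards [eventually_ge_atTop 1] with n hn
  rw [h.integral_erwX_sq_of_critical hn, mul_div_mul_left _ _ (by positivity)]
end

section
/- Let s_n^2 = q(1-q) + Σ_{j=2}^n 1/a_j^2 with a_j = Γ(j + 2p - 1)/(Γ(j) Γ(2p)). If p < 3/4, then s_n^2 ~ Γ(2p)^2 n^{3-4p}/(3-4p) as n → ∞. -/
open MeasureTheory ProbabilityTheory Filter

/-! Log-convexity of `Γ` gives Wendel's inequalities, which squeeze `Γ(n + x) / (Γ(n) nˣ)` to `1`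
for `0 < x < 1`; the functional equation extends `Γ(n + x) ~ Γ(n) nˣ` to every real `x`. Hence
`a_j⁻² ~ Γ(2p)² j^(2-4p)`, and since `2 - 4p > -1` this series diverges, so its partial sums are
equivalent to those of the telescoping series `Γ(2p)² ((j + 1)^(3-4p) - j^(3-4p)) / (3 - 4p)`. -/

open Asymptotics Finset Real Topology

namespace Real

theorem Gamma_add_le_Gamma_mul_rpow {s x : ℝ} (hs : 0 < s) (hx₀ : 0 < x) (hx₁ : x < 1) :
    Gamma (s + x) ≤ Gamma s * s ^ x := by
  have hΓ := Gamma_pos_of_pos hs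
  calc Gamma (s + x) = Gamma ((1 - x) * s + x * (s + 1)) := by ring_nf
    _ ≤ Gamma s ^ (1 - x) * Gamma (s + 1) ^ x :=
      Gamma_mul_add_mul_le_rpow_Gamma_mul_rpow_Gamma hs (by linarith) (by linarith) hx₀ (by ring)
    _ = Gamma s ^ (1 - x) * Gamma s ^ x * s ^ x := by
      rw [Gamma_add_one hs.ne', mul_rpow hs.le hΓ.le]; ring
    _ = Gamma s * s ^ x := by rw [← rpow_add hΓ, sub_add_cancel, rpow_one]

theorem mul_Gamma_le_Gamma_add_mul_rpow {s x : ℝ} (hs : 0 < s) (hx₀ : 0 < x) (hx₁ : x < 1) :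
    s * Gamma s ≤ Gamma (s + x) * (s + x) ^ (1 - x) := by
  have hsx : 0 < s + x := by linarith
  have hΓ := Gamma_pos_of_pos hsx
  calc s * Gamma s = Gamma (x * (s + x) + (1 - x) * (s + x + 1)) := by
        rw [← Gamma_add_one hs.ne']; ring_nf
    _ ≤ Gamma (s + x) ^ x * Gamma (s + x + 1) ^ (1 - x) :=
      Gamma_mul_add_mul_le_rpow_Gamma_mul_rpow_Gamma hsx (by linarith) hx₀ (by linarith) (by ring)
    _ = Gamma (s + x) ^ x * Gamma (s + x) ^ (1 - x) * (s + x) ^ (1 - x) := by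
      rw [Gamma_add_one hsx.ne', mul_rpow hsx.le hΓ.le]; ring
    _ = Gamma (s + x) * (s + x) ^ (1 - x) := by rw [← rpow_add hΓ, add_sub_cancel, rpow_one]

theorem isEquivalent_Gamma_nat_add_of_pos_of_lt_one {x : ℝ} (hx₀ : 0 < x) (hx₁ : x < 1) :
    (fun n : ℕ => Gamma (n + x)) ~[atTop] fun n => Gamma n * (n : ℝ) ^ x := by
  refine isEquivalent_of_tendsto_one ?_
  have hlow : Tendsto (fun n : ℕ => ((n : ℝ) / (n + x)) ^ (1 - x)) atTop (𝓝 1) := by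
    simpa using (tendsto_natCast_div_add_atTop x).rpow_const (Or.inl one_ne_zero)
  refine tendsto_of_tendsto_of_tendsto_of_le_of_le' hlow tendsto_const_nhds ?_ ?_
  all_goals filter_upwards [eventually_gt_atTop 0] with n hn
  all_goals have hn : (0 : ℝ) < n := by exact_mod_cast hn
  · rw [Pi.div_apply, div_rpow hn.le (by positivity), div_le_div_iff₀ (by positivity)
      (by positivity)]
    calc (n : ℝ) ^ (1 - x) * (Gamma n * n ^ x) = n * Gamma n := by
          rw [mul_left_comm, ← rpow_add hn, sub_add_cancel, rpow_one, mul_comm]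
      _ ≤ Gamma (n + x) * (n + x) ^ (1 - x) := mul_Gamma_le_Gamma_add_mul_rpow hn hx₀ hx₁
  · rw [Pi.div_apply, div_le_one (by positivity)]
    exact Gamma_add_le_Gamma_mul_rpow hn hx₀ hx₁

theorem isEquivalent_Gamma_nat_add_add_one_iff (x : ℝ) :
    ((fun n : ℕ => Gamma (n + (x + 1))) ~[atTop] fun n => Gamma n * (n : ℝ) ^ (x + 1)) ↔
      (fun n : ℕ => Gamma (n + x)) ~[atTop] fun n => Gamma n * (n : ℝ) ^ x := by
  have hlin : (fun n : ℕ => (n : ℝ) + x) ~[atTop] fun n => (n : ℝ) :=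
    IsEquivalent.refl.add_const_of_norm_tendsto_atTop
      (tendsto_norm_atTop_atTop.comp tendsto_natCast_atTop_atTop)
  have hpos : ∀ᶠ n : ℕ in atTop, 0 < (n : ℝ) + x :=
    (tendsto_atTop_add_const_right _ x tendsto_natCast_atTop_atTop).eventually_gt_atTop 0
  have hL : (fun n : ℕ => ((n : ℝ) + x) * Gamma (n + x)) =ᶠ[atTop]
      fun n : ℕ => Gamma (n + (x + 1)) := by
    filter_upwards [hpos] with n hn
    rw [← add_assoc, Gamma_add_one hn.ne']
  have hR : (fun n : ℕ => (n : ℝ) * (Gamma n * (n : ℝ) ^ x)) =ᶠ[atTop]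
      fun n : ℕ => Gamma n * (n : ℝ) ^ (x + 1) := by
    filter_upwards [eventually_gt_atTop 0] with n hn
    rw [rpow_add_one (by positivity)]
    ring
  constructor
  · intro h
    refine ((h.congr_left hL.symm).congr_right hR.symm |>.div hlin).congr_left ?_
      |>.congr_right ?_
    · filter_upwards [hpos] with n hn
      simp [mul_div_cancel_left₀ _ hn.ne']
    · filter_upwards [eventually_gt_atTop 0] with n hn
      have hn : (n : ℝ) ≠ 0 := by positivity
      simp [mul_div_cancel_left₀ _ hn]
  · intro h
    exact ((hlin.mul h).congr_left hL).congr_right hR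

theorem isEquivalent_Gamma_nat_add (x : ℝ) :
    (fun n : ℕ => Gamma (n + x)) ~[atTop] fun n => Gamma n * (n : ℝ) ^ x := by
  suffices ∀ k : ℤ, (fun n : ℕ => Gamma (n + (Int.fract x + k))) ~[atTop]
      fun n => Gamma n * (n : ℝ) ^ (Int.fract x + k) by
    simpa only [Int.fract_add_floor] using this ⌊x⌋
  intro k
  induction k using Int.induction_on with
  | zero =>
    rcases (Int.fract_nonneg x).eq_or_lt with h | h
    · simpa [← h] using IsEquivalent.refl
    · simpa using isEquivalent_Gamma_nat_add_of_pos_of_lt_one h (Int.fract_lt_one x)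
  | succ k ih =>
    rwa [Int.cast_add, Int.cast_one, ← add_assoc, isEquivalent_Gamma_nat_add_add_one_iff]
  | pred k ih =>
    rwa [Int.cast_sub, Int.cast_one, ← isEquivalent_Gamma_nat_add_add_one_iff, add_sub_assoc',
      sub_add_cancel]

end Real

namespace Asymptotics

theorem IsEquivalent.sum_range {f g : ℕ → ℝ} (h : f ~[atTop] g) (hg : 0 ≤ g)
    (hg_sum : Tendsto (fun n => ∑ i ∈ range n, g i) atTop atTop) :
    (fun n => ∑ i ∈ range n, f i) ~[atTop] fun n => ∑ i ∈ range n, g i := by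
  have := h.isLittleO.sum_range hg hg_sum
  simp only [Pi.sub_apply, sum_sub_distrib] at this
  exact this

end Asymptotics

theorem tendsto_mul_natCast_rpow_div_atTop {K a : ℝ} (hK : 0 < K) (ha : 0 < a) :
    Tendsto (fun n : ℕ => K * (n : ℝ) ^ a / a) atTop atTop :=
  (((tendsto_rpow_atTop ha).comp tendsto_natCast_atTop_atTop).const_mul_atTop hK).atTop_div_const ha

theorem isEquivalent_natCast_succ_rpow (a : ℝ) :
    (fun n : ℕ => ((n + 1 : ℕ) : ℝ) ^ a) ~[atTop] fun n => (n : ℝ) ^ a := by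
  refine IsEquivalent.rpow (fun n => Nat.cast_nonneg n) ?_
  simpa using IsEquivalent.refl.add_const_of_norm_tendsto_atTop
    (tendsto_norm_atTop_atTop.comp (tendsto_natCast_atTop_atTop (R := ℝ)))

theorem isEquivalent_add_one_rpow_sub_rpow (a : ℝ) :
    (fun n : ℕ => ((n : ℝ) + 1) ^ a - (n : ℝ) ^ a) ~[atTop]
      fun n => a * (n : ℝ) ^ (a - 1) := by
  rcases eq_or_ne a 0 with rfl | ha
  · simpa using IsEquivalent.refl
  have hslope : Tendsto (slope (fun y : ℝ => y ^ a) 1) (𝓝[≠] 1) (𝓝 a) := by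
    simpa using hasDerivAt_iff_tendsto_slope.1
      (hasDerivAt_rpow_const (x := 1) (p := a) (Or.inl one_ne_zero))
  have hu : Tendsto (fun n : ℕ => 1 + (n : ℝ)⁻¹) atTop (𝓝[≠] 1) := by
    refine tendsto_nhdsWithin_iff.2 ⟨?_, ?_⟩
    · simpa using tendsto_const_nhds.add (tendsto_inv_atTop_nhds_zero_nat (𝕜 := ℝ))
    · filter_upwards [eventually_gt_atTop 0] with n hn
      simp [hn.ne']
  -- `(n + 1)ᵃ - nᵃ = nᵃ⁻¹ · slope (·ᵃ) 1 (1 + 1/n)`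
  have hratio := (isEquivalent_const_iff_tendsto ha).2 (hslope.comp hu)
  refine (hratio.mul (IsEquivalent.refl (u := fun n : ℕ => (n : ℝ) ^ (a - 1)))).congr_left ?_
  filter_upwards [eventually_gt_atTop 0] with n hn
  have hn : (0 : ℝ) < n := by exact_mod_cast hn
  have hsucc : 1 + (n : ℝ)⁻¹ = (n + 1) / n := by field_simp
  simp only [Pi.mul_apply, Function.comp_apply, slope_def_field, hsucc, one_rpow,
    div_rpow (by positivity : (0 : ℝ) ≤ n + 1) hn.le, rpow_sub_one hn.ne']
  field_simp
  ring

theorem isEquivalent_sum_range_of_isEquivalent_rpow {c : ℕ → ℝ} {K a : ℝ} (hK : 0 < K)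
    (ha : 0 < a) (hc : c ~[atTop] fun n => K * (n : ℝ) ^ (a - 1)) :
    (fun n => ∑ j ∈ range n, c j) ~[atTop] fun n => K * (n : ℝ) ^ a / a := by
  set g : ℕ → ℝ := fun n => K / a * (((n : ℝ) + 1) ^ a - (n : ℝ) ^ a)
  have hcg : c ~[atTop] g := by
    refine hc.trans ((IsEquivalent.refl (u := fun _ => K / a)).mul
      (isEquivalent_add_one_rpow_sub_rpow a).symm |>.congr_left ?_)
    filter_upwards with n
    simp only [Pi.mul_apply]
    field_simp
  have hsum : ∀ n, ∑ j ∈ range n, g j = K * (n : ℝ) ^ a / a := by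
    intro n
    have := sum_range_sub (fun j : ℕ => (j : ℝ) ^ a) n
    push_cast at this
    rw [← mul_sum, this, zero_rpow ha.ne', sub_zero]
    ring
  have hg : 0 ≤ g := fun n => mul_nonneg (div_pos hK ha).le
    (sub_nonneg.2 (rpow_le_rpow (by positivity) (by linarith) ha.le))
  have htop : Tendsto (fun n => ∑ j ∈ range n, g j) atTop atTop := by
    simpa only [hsum] using tendsto_mul_natCast_rpow_div_atTop hK ha
  simpa only [hsum] using hcg.sum_range hg htop

theorem isEquivalent_aERW (p : ℝ) :
    (fun n => aERW p n) ~[atTop] fun n => (n : ℝ) ^ (2 * p - 1) / Gamma (2 * p) := by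
  refine ((isEquivalent_Gamma_nat_add (2 * p - 1)).div
    (IsEquivalent.refl (u := fun n : ℕ => Gamma n * Gamma (2 * p)))).congr_left ?_
    |>.congr_right ?_
  · filter_upwards [eventually_gt_atTop 1] with n hn
    simp [aERW, hn.not_ge]
  · filter_upwards [eventually_gt_atTop 0] with n hn
    rw [Pi.div_apply, mul_div_mul_left _ _ (Gamma_pos_of_pos (Nat.cast_pos.2 hn)).ne']

theorem isEquivalent_inv_aERW_sq (p : ℝ) :
    (fun n => (aERW p n)⁻¹ ^ 2) ~[atTop]
      fun n => Gamma (2 * p) ^ 2 * (n : ℝ) ^ ((3 - 4 * p) - 1) := by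
  refine ((isEquivalent_aERW p).inv.pow 2).congr_right ?_
  filter_upwards [eventually_gt_atTop 0] with n hn
  have hn : (0 : ℝ) < n := by exact_mod_cast hn
  simp only [Pi.pow_apply, Pi.inv_apply, inv_div, div_pow]
  rw [← rpow_natCast, ← rpow_natCast, ← rpow_mul hn.le, div_eq_mul_inv, ← rpow_neg hn.le]
  ring_nf

theorem sSqERW_eq_sum_range {p q : ℝ} {n : ℕ} (hn : 1 ≤ n) :
    sSqERW p q n = q * (1 - q) - 2 + ∑ j ∈ range (n + 1), (aERW p j)⁻¹ ^ 2 := by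
  induction n, hn using Nat.le_induction with
  | base => simp [sSqERW, sum_range_succ, aERW]; ring
  | succ n hn ih =>
    rw [sum_range_succ, ← add_assoc, ← ih, sSqERW, sSqERW, sum_Icc_succ_top (by omega),
      add_assoc]

theorem sSqERW_asymptotic_diffusive_general {p q : ℝ} (hp : p ∈ Set.Ioo (0 : ℝ) (3 / 4)) :
    Tendsto (fun n : ℕ =>
        sSqERW p q n / (Real.Gamma (2 * p) ^ 2 * (n : ℝ) ^ (3 - 4 * p) / (3 - 4 * p)))
      atTop (nhds 1) := by
  obtain ⟨hp₀, hp₁⟩ := hp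
  set a := 3 - 4 * p
  set K := Gamma (2 * p) ^ 2
  have ha : 0 < a := by linarith
  have hK : 0 < K := pow_pos (Gamma_pos_of_pos (by linarith)) 2
  have hD := tendsto_mul_natCast_rpow_div_atTop hK ha
  have hshift : (fun n : ℕ => K * ((n + 1 : ℕ) : ℝ) ^ a / a) ~[atTop]
      fun n => K * (n : ℝ) ^ a / a :=
    (IsEquivalent.refl.mul (isEquivalent_natCast_succ_rpow a)).div IsEquivalent.refl
  have hsum := isEquivalent_sum_range_of_isEquivalent_rpow hK ha (isEquivalent_inv_aERW_sq p)
  have hs : (fun n => sSqERW p q n) ~[atTop] fun n : ℕ => K * (n : ℝ) ^ a / a := by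
    refine ((hsum.comp_tendsto (tendsto_add_atTop_nat 1)).trans hshift)
      |>.const_add_of_norm_tendsto_atTop (c := q * (1 - q) - 2)
        (tendsto_norm_atTop_atTop.comp hD) |>.congr_left ?_
    filter_upwards [eventually_ge_atTop 1] with n hn
    exact (sSqERW_eq_sum_range hn).symm
  exact (isEquivalent_iff_tendsto_one ((hD.eventually_gt_atTop 0).mono fun _ => ne_of_gt)).1 hs

/-- `s_n^2 ~ Γ(2p)^2 n^{3-4p}/(3-4p)` for `p < 3/4`. -/
theorem sSqERW_asymptotic_diffusive {p q : ℝ} (hp : p ∈ Set.Ioo (0 : ℝ) (3 / 4))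
    (hq : q ∈ Set.Ioo (0 : ℝ) 1) :
    Tendsto (fun n : ℕ =>
        sSqERW p q n / (Real.Gamma (2 * p) ^ 2 * (n : ℝ) ^ (3 - 4 * p) / (3 - 4 * p)))
      atTop (nhds 1) :=
  sSqERW_asymptotic_diffusive_general hp
end

section
/- Let s_n^2 = q(1-q) + Σ_{j=2}^n 1/a_j^2 with a_j = Γ(j + 2p - 1)/(Γ(j) Γ(2p)) and p = 3/4. Then s_n^2 ~ Γ(3/2)^2 log n as n → ∞. -/
/-!
For `p = 3/4` one has `a_j = Γ(j + 1/2) / (Γ(j) Γ(3/2))`. Log-convexity of `Γ` gives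
`Γ(x + 1/2)² ≤ Γ(x) Γ(x + 1) = x Γ(x)²`, and the same inequality at `x + 1/2` gives
`x² Γ(x)² ≤ (x + 1/2) Γ(x + 1/2)²`; together they squeeze `a_j⁻² / Γ(3/2)²` between `1/j` and
`1/(j - 1)`. Summing and comparing with the harmonic numbers, `s_n² = Γ(3/2)² log n + O(1)`.
-/

open MeasureTheory ProbabilityTheory Filter

namespace Real

theorem Gamma_midpoint_sq_le_mul {x y : ℝ} (hx : 0 < x) (hy : 0 < y) :
    Gamma ((x + y) / 2) ^ 2 ≤ Gamma x * Gamma y := by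
  have h := Gamma_mul_add_mul_le_rpow_Gamma_mul_rpow_Gamma hx hy one_half_pos one_half_pos
    (add_halves 1)
  rw [← sqrt_eq_rpow, ← sqrt_eq_rpow, ← sqrt_mul (Gamma_pos_of_pos hx).le,
    show 1 / 2 * x + 1 / 2 * y = (x + y) / 2 by ring] at h
  calc Gamma ((x + y) / 2) ^ 2 ≤ √(Gamma x * Gamma y) ^ 2 :=
        pow_le_pow_left₀ (Gamma_pos_of_pos (by positivity)).le h 2
    _ = Gamma x * Gamma y :=
        sq_sqrt (mul_pos (Gamma_pos_of_pos hx) (Gamma_pos_of_pos hy)).le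

theorem Gamma_add_half_sq_le {x : ℝ} (hx : 0 < x) :
    Gamma (x + 1 / 2) ^ 2 ≤ x * Gamma x ^ 2 := by
  have h := Gamma_midpoint_sq_le_mul hx (by linarith : 0 < x + 1)
  rwa [show (x + (x + 1)) / 2 = x + 1 / 2 by ring, Gamma_add_one hx.ne', ← mul_assoc,
    mul_comm (Gamma x), mul_assoc, ← sq] at h

theorem sq_mul_Gamma_sq_le {x : ℝ} (hx : 0 < x) :
    x ^ 2 * Gamma x ^ 2 ≤ (x + 1 / 2) * Gamma (x + 1 / 2) ^ 2 := by
  have h := Gamma_add_half_sq_le (by linarith : 0 < x + 1 / 2)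
  rwa [add_assoc, add_halves, Gamma_add_one hx.ne', mul_pow] at h

theorem inv_le_Gamma_div_Gamma_add_half_sq {x : ℝ} (hx : 0 < x) :
    x⁻¹ ≤ (Gamma x / Gamma (x + 1 / 2)) ^ 2 := by
  have hG := Gamma_pos_of_pos (by linarith : 0 < x + 1 / 2)
  rw [div_pow, le_div_iff₀ (by positivity), inv_mul_le_iff₀ hx]
  exact Gamma_add_half_sq_le hx

theorem Gamma_div_Gamma_add_half_sq_le {x : ℝ} (hx : 1 < x) :
    (Gamma x / Gamma (x + 1 / 2)) ^ 2 ≤ (x - 1)⁻¹ := by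
  have hG := Gamma_pos_of_pos (by linarith : 0 < x + 1 / 2)
  have h := sq_mul_Gamma_sq_le (by linarith : 0 < x)
  rw [div_pow, div_le_iff₀ (by positivity), inv_mul_eq_div, le_div_iff₀ (by linarith)]
  nlinarith [sq_nonneg (Gamma x), sq_nonneg (Gamma (x + 1 / 2))]

end Real

open Asymptotics

theorem Asymptotics.isEquivalent_of_sub_isBigO_one {α : Type*} {l : Filter α} {u v : α → ℝ}
    (h : (u - v) =O[l] fun _ => (1 : ℝ)) (hv : Tendsto (fun x => ‖v x‖) l atTop) :
    u ~[l] v :=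
  h.trans_isLittleO (isLittleO_const_left.2 (Or.inr hv))

theorem sum_Icc_two_inv_natCast {n : ℕ} (hn : 1 ≤ n) :
    ∑ j ∈ Finset.Icc 2 n, (j : ℝ)⁻¹ = harmonic n - 1 := by
  rw [harmonic_eq_sum_Icc, Finset.Icc_eq_cons_Ioc hn, Finset.sum_cons,
    ← Finset.Icc_add_one_left_eq_Ioc]
  push_cast
  ring

theorem sum_Icc_two_inv_natCast_sub_one (m : ℕ) :
    ∑ j ∈ Finset.Icc 2 (m + 1), ((j : ℝ) - 1)⁻¹ = harmonic m := by
  rw [harmonic_eq_sum_Icc, ← Finset.map_add_right_Icc 1 m 1, Finset.sum_map]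
  push_cast
  simp

section ThreeFourths

open Real

theorem inv_aERW_three_fourths_sq {j : ℕ} (hj : 2 ≤ j) :
    (aERW (3 / 4) j)⁻¹ ^ 2 = Gamma (3 / 2) ^ 2 * (Gamma j / Gamma (j + 1 / 2)) ^ 2 := by
  rw [aERW, if_neg (by omega)]
  norm_num
  ring

theorem sum_inv_aERW_three_fourths_sq (n : ℕ) :
    ∑ j ∈ Finset.Icc 2 n, (aERW (3 / 4) j)⁻¹ ^ 2
      = Gamma (3 / 2) ^ 2 * ∑ j ∈ Finset.Icc 2 n, (Gamma j / Gamma (j + 1 / 2)) ^ 2 := by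
  rw [Finset.mul_sum]
  exact Finset.sum_congr rfl fun j hj => inv_aERW_three_fourths_sq (Finset.mem_Icc.1 hj).1

theorem mul_log_sub_one_le_sum_inv_aERW_three_fourths_sq {n : ℕ} (hn : 1 ≤ n) :
    Gamma (3 / 2) ^ 2 * (log n - 1) ≤ ∑ j ∈ Finset.Icc 2 n, (aERW (3 / 4) j)⁻¹ ^ 2 := by
  have hlog : log n ≤ harmonic n :=
    (log_le_log (by positivity) (by push_cast; linarith)).trans (log_add_one_le_harmonic n)
  have hsum : ∑ j ∈ Finset.Icc 2 n, (j : ℝ)⁻¹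
      ≤ ∑ j ∈ Finset.Icc 2 n, (Gamma j / Gamma (j + 1 / 2)) ^ 2 :=
    Finset.sum_le_sum fun j hj => inv_le_Gamma_div_Gamma_add_half_sq
      (Nat.cast_pos.2 (Nat.zero_lt_two.trans_le (Finset.mem_Icc.1 hj).1))
  rw [sum_Icc_two_inv_natCast hn] at hsum
  rw [sum_inv_aERW_three_fourths_sq]
  gcongr
  linarith

theorem sum_inv_aERW_three_fourths_sq_le_mul_log_add_one {n : ℕ} (hn : 1 ≤ n) :
    ∑ j ∈ Finset.Icc 2 n, (aERW (3 / 4) j)⁻¹ ^ 2 ≤ Gamma (3 / 2) ^ 2 * (log n + 1) := by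
  obtain ⟨m, rfl⟩ := Nat.exists_eq_add_of_le' hn
  have hlog : (harmonic m : ℝ) ≤ log (m + 1 : ℕ) + 1 := by
    rcases m.eq_zero_or_pos with rfl | hm
    · simp
    · have := log_le_log (by positivity) (by push_cast; linarith : (m : ℝ) ≤ (m + 1 : ℕ))
      linarith [harmonic_le_one_add_log m]
  have hsum : ∑ j ∈ Finset.Icc 2 (m + 1), (Gamma j / Gamma (j + 1 / 2)) ^ 2
      ≤ ∑ j ∈ Finset.Icc 2 (m + 1), ((j : ℝ) - 1)⁻¹ :=
    Finset.sum_le_sum fun j hj =>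
      Gamma_div_Gamma_add_half_sq_le (by exact_mod_cast (Finset.mem_Icc.1 hj).1)
  rw [sum_Icc_two_inv_natCast_sub_one] at hsum
  rw [sum_inv_aERW_three_fourths_sq]
  gcongr
  linarith

theorem isBigO_sSqERW_three_fourths_sub_mul_log (q : ℝ) :
    (fun n : ℕ => sSqERW (3 / 4) q n - Gamma (3 / 2) ^ 2 * log n) =O[atTop]
      fun _ => (1 : ℝ) := by
  refine IsBigO.of_bound (|q * (1 - q)| + Gamma (3 / 2) ^ 2) ?_
  filter_upwards [eventually_ge_atTop 1] with n hn
  have hsum : |∑ j ∈ Finset.Icc 2 n, (aERW (3 / 4) j)⁻¹ ^ 2 - Gamma (3 / 2) ^ 2 * log n|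
      ≤ Gamma (3 / 2) ^ 2 := by
    have := mul_log_sub_one_le_sum_inv_aERW_three_fourths_sq hn
    have := sum_inv_aERW_three_fourths_sq_le_mul_log_add_one hn
    rw [abs_sub_le_iff]; constructor <;> linarith
  rw [sSqERW, norm_one, mul_one, norm_eq_abs, add_sub_assoc]
  exact (abs_add_le _ _).trans (by gcongr)

end ThreeFourths

theorem sSqERW_asymptotic_critical_general {q : ℝ} :
    Tendsto (fun n : ℕ =>
        sSqERW (3 / 4) q n / (Real.Gamma (3 / 2) ^ 2 * Real.log n))
      atTop (nhds 1) := by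
  have hlog : Tendsto (fun n : ℕ => Real.Gamma (3 / 2) ^ 2 * Real.log n) atTop atTop :=
    (Real.tendsto_log_atTop.comp tendsto_natCast_atTop_atTop).const_mul_atTop (by positivity)
  have hequiv := isEquivalent_of_sub_isBigO_one
    (isBigO_sSqERW_three_fourths_sub_mul_log q) (tendsto_norm_atTop_atTop.comp hlog)
  exact (isEquivalent_iff_tendsto_one (hlog.eventually_ne_atTop 0)).1 hequiv

/-- `s_n^2 ~ Γ(3/2)^2 log n` at the critical value `p = 3/4`. -/
theorem sSqERW_asymptotic_critical {q : ℝ} (hq : q ∈ Set.Ioo (0 : ℝ) 1) :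
    Tendsto (fun n : ℕ =>
        sSqERW (3 / 4) q n / (Real.Gamma (3 / 2) ^ 2 * Real.log n))
      atTop (nhds 1) :=
  sSqERW_asymptotic_critical_general
end

section
/- With a_n, s_n as above and p < 3/4, a_n s_n ~ sqrt(n/(3-4p)) as n → ∞; and for p = 3/4, a_n s_n ~ sqrt(n log n). -/
open MeasureTheory ProbabilityTheory Filter

/-!
Euler's limit formula `Real.GammaSeq_tendsto_Gamma` gives `a_n ~ n^(2p-1) / Γ(2p)`, i.e.
`v_n := n / a_n² ~ Γ(2p)² n^(3-4p)`, and `s_n²` has increments `a_(n+1)⁻² = v_(n+1) / (n+1)`.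

For `p < 3/4` the recursion `a_(n+1) = a_n (n + 2p - 1) / n` gives
`v_(n+1) - v_n = ((3-4p) n - (2p-1)²) / (n a_(n+1)²)`, so the increments of `s_n²` and of
`v_n / (3-4p)` have ratio tending to `1`; since `v_n → ∞`, Stolz–Cesàro yields
`s_n² ~ n / ((3-4p) a_n²)`.

For `p = 3/4`, `v_n → Γ(3/2)²`, so the increments of `s_n²` are `~ Γ(3/2)² / n`, and Stolz–Cesàro
against `Γ(3/2)² log n` yields `s_n² ~ v_n log n = n log n / a_n²`.
-/

open Filter Topology Asymptotics Finset
open scoped Nat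

theorem tendsto_div_of_tendsto_sub_div_sub_of_strictMono {u v : ℕ → ℝ} {L : ℝ}
    (hv : Tendsto v atTop atTop) (hmono : StrictMono v)
    (h : Tendsto (fun n => (u (n + 1) - u n) / (v (n + 1) - v n)) atTop (𝓝 L)) :
    Tendsto (fun n => u n / v n) atTop (𝓝 L) := by
  have hΔv : ∀ n, 0 < v (n + 1) - v n := fun n => sub_pos.2 (hmono n.lt_succ_self)
  have hΔ : (fun n => u (n + 1) - u n - L * (v (n + 1) - v n)) =o[atTop]
      fun n => v (n + 1) - v n := by
    rw [isLittleO_iff_tendsto fun n hn => absurd hn (hΔv n).ne']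
    refine (tendsto_sub_nhds_zero_iff.2 h).congr fun n => ?_
    rw [sub_div (u (n + 1) - u n), mul_div_cancel_right₀ _ (hΔv n).ne']
  have hsum := hΔ.sum_range (fun n => (hΔv n).le) <|
    (tendsto_atTop_add_const_right _ (-v 0) hv).congr fun n => by rw [sum_range_sub, sub_eq_add_neg]
  have hsum_eq : ∀ n, ∑ i ∈ range n, (u (i + 1) - u i - L * (v (i + 1) - v i)) =
      u n - u 0 - L * (v n - v 0) := fun n => by
    rw [sum_sub_distrib, ← mul_sum, sum_range_sub, sum_range_sub]
  simp only [hsum_eq, sum_range_sub] at hsum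
  have hconst : ∀ c : ℝ, (fun _ => c) =o[atTop] v := fun c =>
    isLittleO_const_left.2 (Or.inr (tendsto_norm_atTop_atTop.comp hv))
  have hmain : (fun n => u n - L * v n) =o[atTop] v :=
    ((hsum.trans_isBigO ((isBigO_refl v atTop).sub (hconst (v 0)).isBigO)).add
      (hconst (u 0 - L * v 0))).congr_left fun n => by ring
  have hlim := hmain.tendsto_div_nhds_zero.add_const L
  rw [zero_add] at hlim
  refine hlim.congr' ?_
  filter_upwards [hv.eventually_ne_atTop 0] with n hn
  rw [sub_div, mul_div_cancel_right₀ _ hn, sub_add_cancel]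

theorem tendsto_div_of_tendsto_sub_div_sub {u v : ℕ → ℝ} {L : ℝ}
    (hv : Tendsto v atTop atTop) (hmono : ∀ᶠ n in atTop, v n < v (n + 1))
    (h : Tendsto (fun n => (u (n + 1) - u n) / (v (n + 1) - v n)) atTop (𝓝 L)) :
    Tendsto (fun n => u n / v n) atTop (𝓝 L) := by
  obtain ⟨N, hN⟩ := eventually_atTop.1 hmono
  refine (tendsto_add_atTop_iff_nat N).1 <|
    tendsto_div_of_tendsto_sub_div_sub_of_strictMono (u := fun n => u (n + N))
      ((tendsto_add_atTop_iff_nat N).2 hv)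
      (strictMono_nat_of_lt_succ fun n => ?_) ?_
  · simpa only [add_right_comm n 1 N] using hN (n + N) (Nat.le_add_left N n)
  · simpa only [add_right_comm _ 1 N] using (tendsto_add_atTop_iff_nat N).2 h

lemma aERW_one (p : ℝ) : aERW p 1 = 1 := by
  simp [aERW]

lemma aERW_pos {p : ℝ} (hp : 0 < p) (n : ℕ) : 0 < aERW p n := by
  unfold aERW
  split_ifs with hn
  · exact one_pos
  · have h2 : (2 : ℝ) ≤ n := by exact_mod_cast (not_le.1 hn)
    exact div_pos (Real.Gamma_pos_of_pos (by linarith))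
      (mul_pos (Real.Gamma_pos_of_pos (by linarith)) (Real.Gamma_pos_of_pos (by linarith)))

lemma aERW_succ {p : ℝ} (hp : 0 < p) {n : ℕ} (hn : 1 ≤ n) :
    aERW p (n + 1) = aERW p n * ((n + (2 * p - 1)) / n) := by
  have hn' : (1 : ℝ) ≤ n := by exact_mod_cast hn
  have hG2p := (Real.Gamma_pos_of_pos (by linarith : (0 : ℝ) < 2 * p)).ne'
  have hGn := (Real.Gamma_pos_of_pos (by linarith : (0 : ℝ) < n)).ne'
  rw [aERW, if_neg (by omega), Nat.cast_succ, add_right_comm,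
    Real.Gamma_add_one (by linarith), Real.Gamma_add_one (by linarith)]
  rcases hn.eq_or_lt with rfl | hn
  · rw [aERW_one, Nat.cast_one, Real.Gamma_one, add_sub_cancel]
    field_simp
  · rw [aERW, if_neg (by omega)]
    field_simp

lemma prod_range_two_mul_add_eq_aERW {p : ℝ} (hp : 0 < p) (n : ℕ) :
    ∏ j ∈ range (n + 1), (2 * p + j) = (2 * p + n) * n ! * aERW p (n + 1) := by
  induction n with
  | zero => simp [aERW_one]
  | succ n ih =>
    rw [prod_range_succ, ih, aERW_succ hp n.succ_pos, Nat.factorial_succ]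
    push_cast
    field_simp
    ring

lemma GammaSeq_two_mul_eq_rpow_div_aERW {p : ℝ} (hp : 0 < p) (n : ℕ) :
    Real.GammaSeq (2 * p) n = (n : ℝ) ^ (2 * p) / ((2 * p + n) * aERW p (n + 1)) := by
  have := (aERW_pos hp (n + 1)).ne'
  have : (n ! : ℝ) ≠ 0 := by positivity
  rw [Real.GammaSeq, prod_range_two_mul_add_eq_aERW hp]
  field_simp

lemma tendsto_succ_mul_add_sq_div_cube (a : ℝ) :
    Tendsto (fun n : ℕ => ((n : ℝ) + 1) * (a + n) ^ 2 / (n : ℝ) ^ 3) atTop (𝓝 1) := by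
  have h0 := tendsto_one_div_atTop_nhds_zero_nat (𝕜 := ℝ)
  have h := ((tendsto_const_nhds (x := (1 : ℝ))).add h0).mul
    (((tendsto_const_nhds (x := (1 : ℝ))).add (h0.const_mul a)).pow 2)
  rw [add_zero, mul_zero, add_zero, one_pow, mul_one] at h
  refine h.congr' ?_
  filter_upwards [eventually_gt_atTop 0] with n hn
  have : (n : ℝ) ≠ 0 := by positivity
  field_simp
  ring

lemma tendsto_succ_div_aERW_sq_div_rpow {p : ℝ} (hp : 0 < p) :
    Tendsto (fun n : ℕ => ((n : ℝ) + 1) / aERW p (n + 1) ^ 2 / (n : ℝ) ^ (3 - 4 * p)) atTop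
      (𝓝 (Real.Gamma (2 * p) ^ 2)) := by
  have h := ((Real.GammaSeq_tendsto_Gamma (2 * p)).pow 2).mul
    (tendsto_succ_mul_add_sq_div_cube (2 * p))
  rw [mul_one] at h
  refine h.congr' ?_
  filter_upwards [eventually_gt_atTop 0] with n hn
  have hn : (0 : ℝ) < n := by exact_mod_cast hn
  have ha := (aERW_pos hp (n + 1)).ne'
  have hrpow : (n : ℝ) ^ (3 - 4 * p) = n ^ 3 / ((n : ℝ) ^ (2 * p)) ^ 2 := by
    rw [Real.rpow_sub hn, ← Real.rpow_natCast, ← Real.rpow_natCast, ← Real.rpow_mul hn.le]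
    ring_nf
  have : (n : ℝ) ^ (2 * p) ≠ 0 := (Real.rpow_pos_of_pos hn _).ne'
  rw [GammaSeq_two_mul_eq_rpow_div_aERW hp, hrpow]
  field_simp

lemma sSqERW_succ_sub (p q : ℝ) {n : ℕ} (hn : 1 ≤ n) :
    sSqERW p q (n + 1) - sSqERW p q n = (aERW p (n + 1))⁻¹ ^ 2 := by
  rw [sSqERW, sSqERW, sum_Icc_succ_top (by omega)]
  ring

lemma natCast_div_aERW_sq_eq {p : ℝ} (hp : 0 < p) {n : ℕ} (hn : 1 ≤ n) :
    (n : ℝ) / aERW p n ^ 2 = (n + (2 * p - 1)) ^ 2 / (n * aERW p (n + 1) ^ 2) := by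
  have hn' : (1 : ℝ) ≤ n := by exact_mod_cast hn
  have : (n : ℝ) + (2 * p - 1) ≠ 0 := by linarith
  have := (aERW_pos hp n).ne'
  rw [aERW_succ hp hn]
  field_simp

lemma tendsto_sSqERW_div_of_lt {p : ℝ} (q : ℝ) (hp : 0 < p) (hp' : p < 3 / 4) :
    Tendsto (fun n : ℕ => sSqERW p q n / ((n : ℝ) / (3 - 4 * p) / aERW p n ^ 2)) atTop
      (𝓝 1) := by
  set d := 3 - 4 * p with hd_def
  set c := 2 * p - 1
  have hd : 0 < d := by linarith
  have hw : Tendsto (fun n : ℕ => (n : ℝ) / d / aERW p n ^ 2) atTop atTop := by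
    rw [← tendsto_add_atTop_iff_nat 1]
    refine (((tendsto_succ_div_aERW_sq_div_rpow hp).pos_mul_atTop (by positivity)
      ((tendsto_rpow_atTop hd).comp tendsto_natCast_atTop_atTop)).atTop_div_const hd).congr' ?_
    filter_upwards [eventually_gt_atTop 0] with n hn
    have : (n : ℝ) ^ d ≠ 0 := (Real.rpow_pos_of_pos (by exact_mod_cast hn) _).ne'
    simp only [Function.comp_apply, ← hd_def]
    push_cast
    field_simp
  have hw_sub : ∀ n : ℕ, 1 ≤ n → (n + 1 : ℕ) / d / aERW p (n + 1) ^ 2 - n / d / aERW p n ^ 2 =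
      (n * d - c ^ 2) / (d * n * aERW p (n + 1) ^ 2) := by
    intro n hn
    have : (n : ℝ) ≠ 0 := by positivity
    have := (aERW_pos hp (n + 1)).ne'
    rw [div_right_comm (n : ℝ), natCast_div_aERW_sq_eq hp hn]
    push_cast
    field_simp
    ring
  have hlarge : ∀ᶠ n : ℕ in atTop, 1 ≤ n ∧ 0 < n * d - c ^ 2 := by
    filter_upwards [eventually_ge_atTop 1, eventually_gt_atTop ⌈c ^ 2 / d⌉₊] with n hn hcn
    refine ⟨hn, sub_pos.2 ((div_lt_iff₀ hd).1 (Nat.lt_of_ceil_lt hcn))⟩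
  refine tendsto_div_of_tendsto_sub_div_sub hw ?_ ?_
  · filter_upwards [hlarge] with n ⟨hn, hnd⟩
    rw [← sub_pos, hw_sub n hn]
    have := aERW_pos hp (n + 1)
    positivity
  · have h0 := (tendsto_one_div_atTop_nhds_zero_nat (𝕜 := ℝ)).const_mul (c ^ 2 / d)
    have h := ((tendsto_const_nhds (x := (1 : ℝ))).sub h0).inv₀ (by simp)
    rw [mul_zero, sub_zero, inv_one] at h
    refine h.congr' ?_
    filter_upwards [hlarge] with n ⟨hn, hnd⟩
    have : (n : ℝ) ≠ 0 := by positivity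
    have := (aERW_pos hp (n + 1)).ne'
    rw [sSqERW_succ_sub p q hn, hw_sub n hn]
    field_simp

lemma tendsto_succ_mul_log_succ_sub_log :
    Tendsto (fun n : ℕ => ((n : ℝ) + 1) * (Real.log (n + 1) - Real.log n)) atTop (𝓝 1) := by
  have hmul : Tendsto (fun n : ℕ => (n : ℝ) * Real.log (1 + 1 / n)) atTop (𝓝 1) :=
    (Real.tendsto_mul_log_one_add_div_atTop 1).comp tendsto_natCast_atTop_atTop
  have h := hmul.add Real.tendsto_log_nat_add_one_sub_log
  rw [add_zero] at h
  refine h.congr' ?_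
  filter_upwards [eventually_gt_atTop 0] with n hn
  have hn : (0 : ℝ) < n := by exact_mod_cast hn
  rw [← Real.log_div (by positivity) hn.ne', add_div, div_self hn.ne', add_comm (1 : ℝ)]
  ring

lemma tendsto_succ_div_aERW_three_div_four_sq :
    Tendsto (fun n : ℕ => ((n : ℝ) + 1) / aERW (3 / 4) (n + 1) ^ 2) atTop
      (𝓝 (Real.Gamma (3 / 2) ^ 2)) := by
  have h := tendsto_succ_div_aERW_sq_div_rpow (p := 3 / 4) (by norm_num)
  norm_num only [Real.rpow_zero, div_one] at h
  exact h

lemma tendsto_sSqERW_three_div_four_div_log (q : ℝ) :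
    Tendsto (fun n : ℕ => sSqERW (3 / 4) q n / (Real.Gamma (3 / 2) ^ 2 * Real.log n)) atTop
      (𝓝 1) := by
  set ℓ := Real.Gamma (3 / 2) ^ 2
  have hℓ : 0 < ℓ := pow_pos (Real.Gamma_pos_of_pos (by norm_num)) 2
  refine tendsto_div_of_tendsto_sub_div_sub
    ((Real.tendsto_log_atTop.comp tendsto_natCast_atTop_atTop).const_mul_atTop hℓ) ?_ ?_
  · filter_upwards [eventually_gt_atTop 0] with n hn
    have hn : (0 : ℝ) < n := by exact_mod_cast hn
    push_cast
    exact mul_lt_mul_of_pos_left (Real.log_lt_log hn (by linarith)) hℓ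
  · have h := (tendsto_succ_div_aERW_three_div_four_sq.div_const ℓ).div
      tendsto_succ_mul_log_succ_sub_log one_ne_zero
    rw [div_self hℓ.ne', div_one] at h
    refine h.congr' ?_
    filter_upwards [eventually_ge_atTop 1] with n hn
    have := (aERW_pos (by norm_num : (0 : ℝ) < 3 / 4) (n + 1)).ne'
    have : ((n : ℝ) + 1) ≠ 0 := by positivity
    rw [Pi.div_apply, sSqERW_succ_sub _ q hn]
    push_cast
    field_simp

lemma tendsto_sSqERW_three_div_four_div (q : ℝ) :
    Tendsto (fun n : ℕ => sSqERW (3 / 4) q n / (n * Real.log n / aERW (3 / 4) n ^ 2)) atTop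
      (𝓝 1) := by
  have hℓ : 0 < Real.Gamma (3 / 2) ^ 2 := pow_pos (Real.Gamma_pos_of_pos (by norm_num)) 2
  have hv : Tendsto (fun n : ℕ => (n : ℝ) / aERW (3 / 4) n ^ 2) atTop
      (𝓝 (Real.Gamma (3 / 2) ^ 2)) :=
    (tendsto_add_atTop_iff_nat 1).1 (by push_cast; exact tendsto_succ_div_aERW_three_div_four_sq)
  have h := (tendsto_sSqERW_three_div_four_div_log q).mul
    ((tendsto_const_nhds (x := Real.Gamma (3 / 2) ^ 2)).div hv hℓ.ne')
  rw [div_self hℓ.ne', mul_one] at h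
  refine h.congr' ?_
  filter_upwards [eventually_gt_atTop 1] with n hn
  have hn : (1 : ℝ) < n := by exact_mod_cast hn
  have := (Real.log_pos hn).ne'
  have := (aERW_pos (by norm_num : (0 : ℝ) < 3 / 4) n).ne'
  have : (n : ℝ) ≠ 0 := by positivity
  rw [Pi.div_apply]
  field_simp

lemma tendsto_mul_sqrt_div_sqrt_of_tendsto {α : Type*} {l : Filter α} {a u x : α → ℝ}
    (ha : ∀ i, 0 ≤ a i) (hx : ∀ i, 0 ≤ x i) (h : Tendsto (fun i => u i / (x i / a i ^ 2)) l (𝓝 1)) :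
    Tendsto (fun i => a i * √(u i) / √(x i)) l (𝓝 1) := by
  have heq : ∀ i, √(u i / (x i / a i ^ 2)) = a i * √(u i) / √(x i) := fun i => by
    rw [div_div_eq_mul_div, Real.sqrt_div' _ (hx i), Real.sqrt_mul' _ (sq_nonneg _),
      Real.sqrt_sq (ha i), mul_comm]
  simpa only [heq, Real.sqrt_one] using h.sqrt

theorem aERW_mul_s_asymptotic_general {p q : ℝ} (hp : p ∈ Set.Ioo (0 : ℝ) 1) :
    (p < 3 / 4 →
      Tendsto (fun n : ℕ =>
          aERW p n * Real.sqrt (sSqERW p q n) / Real.sqrt ((n : ℝ) / (3 - 4 * p)))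
        atTop (nhds 1)) ∧
    (p = 3 / 4 →
      Tendsto (fun n : ℕ =>
          aERW p n * Real.sqrt (sSqERW p q n) / Real.sqrt ((n : ℝ) * Real.log n))
        atTop (nhds 1)) := by
  refine ⟨fun hlt => ?_, fun heq => ?_⟩
  · exact tendsto_mul_sqrt_div_sqrt_of_tendsto (fun n => (aERW_pos hp.1 n).le)
      (fun n => div_nonneg n.cast_nonneg (by linarith)) (tendsto_sSqERW_div_of_lt q hp.1 hlt)
  · subst heq
    exact tendsto_mul_sqrt_div_sqrt_of_tendsto (fun n => (aERW_pos hp.1 n).le)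
      (fun n => mul_nonneg n.cast_nonneg (Real.log_natCast_nonneg n))
      (tendsto_sSqERW_three_div_four_div q)

/-- `a_n s_n ~ sqrt(n/(3-4p))` for `p < 3/4` and `a_n s_n ~ sqrt(n log n)` at
`p = 3/4`. -/
theorem aERW_mul_s_asymptotic {p q : ℝ} (hp : p ∈ Set.Ioo (0 : ℝ) 1) (hp' : p ≤ 3 / 4)
    (hq : q ∈ Set.Ioo (0 : ℝ) 1) :
    (p < 3 / 4 →
      Tendsto (fun n : ℕ =>
          aERW p n * Real.sqrt (sSqERW p q n) / Real.sqrt ((n : ℝ) / (3 - 4 * p)))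
        atTop (nhds 1)) ∧
    (p = 3 / 4 →
      Tendsto (fun n : ℕ =>
          aERW p n * Real.sqrt (sSqERW p q n) / Real.sqrt ((n : ℝ) * Real.log n))
        atTop (nhds 1)) :=
  aERW_mul_s_asymptotic_general hp
end
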